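/- Let 1 ≤ p < ∞ and 0 < s < 1. Let E ⊂ X be a closed set, z ∈ E, r > 0, and let F be the truncated set obtained from E, z, r by the truncation construction. Let σ ≥ 1 and κ ≥ 2. Then there exist constants C₁ > 0, depending only on s, c_μ, p, σ, κ, and C₂ = 1 + 3^p κ^{sp} C(c_μ,σ) (with C(c_μ,σ) depending only on c_μ and σ), such that for every Lipschitz function u : X → ℝ with u = 0 on F one has ∫_{B(z,σκr)\F} |u(x)|^p dist(x,F)^{−sp} dμ(x) ≤ C₁ ∫_{B(z,σκr)} ∫_{B(z,σκr)} |u(x)−u(y)|^p / (d(x,y)^{sp} μ(B(x,d(x,y)))) dμ(y) dμ(x) + C₂ ∫_{B(z,κr)\F} |u(x)|^p dist(x,F)^{−sp} dμ(x). -/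

import Mathlib

open Metric MeasureTheory Set
open scoped ENNReal NNReal

/-- The effective diameter bound: `diam E`, unless `diam E = 0`, in which case `diam X`. -/
noncomputable def diamBound {X : Type*} [PseudoEMetricSpace X] (E : Set X) : ℝ≥0∞ :=
  haveI := Classical.propDecidable
  if EMetric.diam E = 0 then EMetric.diam (Set.univ : Set X) else EMetric.diam E

/-- The truncation sequence: `F₀ = E ∩ closedBall z (r/2)` and recursively
`F_{j+1} = ⋃_{x ∈ F_j} E ∩ closedBall x (r / 2^(j+2))`. -/
def truncSeq {X : Type*} [MetricSpace X] (E : Set X) (z : X) (r : ℝ) : ℕ → Set X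
  | 0 => E ∩ closedBall z (r / 2)
  | j + 1 => ⋃ x ∈ truncSeq E z r j, E ∩ closedBall x (r / 2 ^ (j + 2))

/-- The truncated set `F`, the closure of the union of the truncation sequence. -/
def truncSet {X : Type*} [MetricSpace X] (E : Set X) (z : X) (r : ℝ) : Set X :=
  closure (⋃ j : ℕ, truncSeq E z r j)

/-- The fractional `(s,p)`-Gagliardo kernel `|u x - u y|^p / (d(x,y)^{sp} μ(B(x,d(x,y))))`. -/
noncomputable def fracKernel {X : Type*} [MetricSpace X] [MeasurableSpace X]
    (μ : Measure X) (s p : ℝ) (u : X → ℝ) (x y : X) : ℝ≥0∞ :=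
  ENNReal.ofReal (|u x - u y| ^ p) /
    (ENNReal.ofReal (dist x y ^ (s * p)) * μ (ball x (dist x y)))

/-!
Since `z ∈ F ⊆ B̄(z, r)` and `κ ≥ 2`, every point `x` of the annulus `B(z, σκr) \ B(z, κr)` is at
distance at least `r` from `F`, so the weight `|u x|^p dist(x, F)^{-sp}` there is at most
`r^{-sp} |u x|^p`. Average `|u x|^p ≤ 2^{p-1} (|u x - u y|^p + |u y|^p)` over `y ∈ B(z, κr)`.
As `d(x, y) ≤ 2σκr` and, by doubling, `μ(B(x, d(x, y))) ≤ c_μ^N μ(B(z, κr))` when `2^N ≥ 3σ`,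
the first term is at most `(2σκr)^{sp} c_μ^N μ(B(z, κr))` times the Gagliardo kernel; as
`dist(y, F) < κr`, the second is at most `(κr)^{sp}` times the weight at `y`, which vanishes on
`F`. The powers of `r` cancel, and integrating over the annulus, whose measure is again at most
`c_μ^N μ(B(z, κr))`, cancels the average.
-/

/-- With `b = 0` this still holds, as `a / 0 = ⊤` unless `a = 0`: this is what lets it bound the
weight on `F` and the kernel on the diagonal, where the denominators vanish. -/
theorem ENNReal.le_mul_div_of_le {a b c : ℝ≥0∞} (hc0 : c ≠ 0) (hc : c ≠ ⊤) (hbc : b ≤ c) :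
    a ≤ c * (a / b) := by
  rcases eq_or_ne b 0 with rfl | hb
  · rcases eq_or_ne a 0 with rfl | ha
    · simp
    · simp [ENNReal.div_zero ha, ENNReal.mul_top hc0]
  · calc a = a / b * b := (ENNReal.div_mul_cancel hb (ne_top_of_le_ne_top hc hbc)).symm
      _ ≤ a / b * c := by gcongr
      _ = c * (a / b) := mul_comm _ _

theorem ENNReal.ofReal_abs_rpow_le_two_rpow_mul {p : ℝ} (hp : 1 ≤ p) (a b : ℝ) :
    ENNReal.ofReal (|a| ^ p) ≤
      ENNReal.ofReal (2 ^ (p - 1)) * (ENNReal.ofReal (|a - b| ^ p) + ENNReal.ofReal (|b| ^ p)) := by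
  have hp0 : (0 : ℝ) ≤ p := zero_le_one.trans hp
  rw [← ENNReal.ofReal_rpow_of_nonneg (abs_nonneg _) hp0,
    ← ENNReal.ofReal_rpow_of_nonneg (abs_nonneg _) hp0,
    ← ENNReal.ofReal_rpow_of_nonneg (abs_nonneg _) hp0,
    ← ENNReal.ofReal_rpow_of_nonneg zero_le_two (by linarith), ENNReal.ofReal_ofNat]
  calc ENNReal.ofReal |a| ^ p ≤ (ENNReal.ofReal |a - b| + ENNReal.ofReal |b|) ^ p := by
        gcongr
        rw [← ENNReal.ofReal_add (abs_nonneg _) (abs_nonneg _)]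
        exact ENNReal.ofReal_le_ofReal (by simpa using abs_add_le (a - b) b)
    _ ≤ _ := ENNReal.rpow_add_le_mul_rpow_add_rpow _ _ hp

section Truncation

variable {X : Type*} [MetricSpace X] (E : Set X) (z : X)

theorem truncSeq_subset_closedBall (r : ℝ) (j : ℕ) :
    truncSeq E z r j ⊆ closedBall z (r - r / 2 ^ (j + 1)) := by
  induction j with
  | zero =>
    intro x hx
    simpa [mem_closedBall, sub_half] using hx.2
  | succ j ih =>
    intro x hx
    simp only [truncSeq, mem_iUnion] at hx
    obtain ⟨y, hy, -, hxy⟩ := hx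
    have hstep : r / 2 ^ (j + 2) + (r - r / 2 ^ (j + 1)) = r - r / 2 ^ (j + 1 + 1) := by
      field_simp
      ring
    rw [mem_closedBall] at hxy ⊢
    linarith [dist_triangle x y z, mem_closedBall.1 (ih hy)]

theorem truncSet_subset_closedBall {r : ℝ} (hr : 0 ≤ r) : truncSet E z r ⊆ closedBall z r :=
  closure_minimal (iUnion_subset fun j => (truncSeq_subset_closedBall E z r j).trans
    (closedBall_subset_closedBall (sub_le_self r (by positivity)))) isClosed_closedBall

theorem mem_truncSet_self {r : ℝ} (hz : z ∈ E) (hr : 0 ≤ r) : z ∈ truncSet E z r :=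
  subset_closure (mem_iUnion.2 ⟨0, hz, by simp only [mem_closedBall, dist_self]; positivity⟩)

end Truncation

section DistWeight

variable {X : Type*} [MetricSpace X] {s p : ℝ} {u : X → ℝ} {F : Set X} {x : X}

noncomputable def distWeight (s p : ℝ) (F : Set X) (u : X → ℝ) (x : X) : ℝ≥0∞ :=
  ENNReal.ofReal (|u x| ^ p) / ENNReal.ofReal (infDist x F ^ (s * p))

theorem measurable_distWeight [MeasurableSpace X] [OpensMeasurableSpace X] (hu : Measurable u) :
    Measurable (distWeight s p F u) := by
  unfold distWeight
  fun_prop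

theorem distWeight_eq_zero (hp : p ≠ 0) (hx : u x = 0) : distWeight s p F u x = 0 := by
  simp [distWeight, hx, Real.zero_rpow hp]

theorem ofReal_abs_rpow_le_mul_distWeight {ρ : ℝ} (hsp : 0 ≤ s * p) (hρ : 0 < ρ)
    (hx : infDist x F ≤ ρ) :
    ENNReal.ofReal (|u x| ^ p) ≤ ENNReal.ofReal (ρ ^ (s * p)) * distWeight s p F u x :=
  ENNReal.le_mul_div_of_le (ENNReal.ofReal_pos.2 (Real.rpow_pos_of_pos hρ _)).ne'
    ENNReal.ofReal_ne_top
    (ENNReal.ofReal_le_ofReal (Real.rpow_le_rpow infDist_nonneg hx hsp))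

theorem ofReal_rpow_mul_distWeight_le {r : ℝ} (hsp : 0 ≤ s * p) (hr : 0 ≤ r)
    (hx : r ≤ infDist x F) :
    ENNReal.ofReal (r ^ (s * p)) * distWeight s p F u x ≤ ENNReal.ofReal (|u x| ^ p) :=
  (mul_le_mul_left (ENNReal.ofReal_le_ofReal (Real.rpow_le_rpow hr hx hsp)) _).trans
    ENNReal.mul_div_le

end DistWeight

section HoleFilling

variable {X : Type*} [MetricSpace X] [MeasurableSpace X] {μ : Measure X} {c s p r σ κ : ℝ}
  {N : ℕ} {u : X → ℝ} {F : Set X} {x y z : X}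

theorem ofReal_abs_sub_rpow_le_mul_fracKernel {ρ : ℝ} {V : ℝ≥0∞} (hsp : 0 ≤ s * p)
    (hρ : 0 < ρ) (hxy : dist x y ≤ ρ) (hV : μ (ball x (dist x y)) ≤ V) (hV0 : V ≠ 0)
    (hVtop : V ≠ ⊤) :
    ENNReal.ofReal (|u x - u y| ^ p) ≤
      ENNReal.ofReal (ρ ^ (s * p)) * V * fracKernel μ s p u x y :=
  ENNReal.le_mul_div_of_le
    (mul_ne_zero (ENNReal.ofReal_pos.2 (Real.rpow_pos_of_pos hρ _)).ne' hV0)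
    (ENNReal.mul_ne_top ENNReal.ofReal_ne_top hVtop)
    (mul_le_mul' (ENNReal.ofReal_le_ofReal (Real.rpow_le_rpow dist_nonneg hxy hsp)) hV)

theorem measure_ball_two_pow_mul_le
    (hdoubling : ∀ (x : X) (ρ : ℝ), 0 < ρ →
      μ (ball x (2 * ρ)) ≤ ENNReal.ofReal c * μ (ball x ρ))
    (x : X) {ρ : ℝ} (hρ : 0 < ρ) (n : ℕ) :
    μ (ball x (2 ^ n * ρ)) ≤ ENNReal.ofReal c ^ n * μ (ball x ρ) := by
  induction n with
  | zero => simp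
  | succ n ih =>
    calc μ (ball x (2 ^ (n + 1) * ρ)) = μ (ball x (2 * (2 ^ n * ρ))) := by
          rw [pow_succ', mul_assoc]
      _ ≤ ENNReal.ofReal c * μ (ball x (2 ^ n * ρ)) := hdoubling _ _ (by positivity)
      _ ≤ ENNReal.ofReal c * (ENNReal.ofReal c ^ n * μ (ball x ρ)) := by gcongr
      _ = ENNReal.ofReal c ^ (n + 1) * μ (ball x ρ) := by rw [pow_succ', mul_assoc]

theorem measure_ball_dist_le_pow_mul
    (hdoubling : ∀ (x : X) (ρ : ℝ), 0 < ρ →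
      μ (ball x (2 * ρ)) ≤ ENNReal.ofReal c * μ (ball x ρ))
    (hσ : 1 ≤ σ) (hκr : 0 < κ * r) (hN : 3 * σ ≤ 2 ^ N)
    (hx : x ∈ ball z (σ * κ * r)) (hy : y ∈ ball z (κ * r)) :
    μ (ball x (dist x y)) ≤ ENNReal.ofReal c ^ N * μ (ball z (κ * r)) := by
  refine (measure_mono (ball_subset_ball' ?_)).trans
    (measure_ball_two_pow_mul_le hdoubling z hκr N)
  rw [mem_ball] at hx hy
  nlinarith [dist_triangle_right x y z, mul_le_mul_of_nonneg_right hN hκr.le]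

theorem ofReal_abs_rpow_le_fracKernel_add_distWeight {V : ℝ≥0∞} (hp : 1 ≤ p)
    (hsp : 0 ≤ s * p) (hσ : 1 ≤ σ) (hr : 0 < r) (hκ : 0 < κ) (hzF : z ∈ F)
    (hx : x ∈ ball z (σ * κ * r)) (hy : y ∈ ball z (κ * r))
    (hV : μ (ball x (dist x y)) ≤ V) (hV0 : V ≠ 0) (hVtop : V ≠ ⊤) :
    ENNReal.ofReal (|u x| ^ p) ≤ ENNReal.ofReal (r ^ (s * p)) *
      (ENNReal.ofReal (2 ^ (p - 1)) * (ENNReal.ofReal ((2 * σ * κ) ^ (s * p)) * V *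
        fracKernel μ s p u x y + ENNReal.ofReal (κ ^ (s * p)) * distWeight s p F u y)) := by
  rw [mem_ball] at hx hy
  have hxy : dist x y ≤ 2 * σ * κ * r := by
    nlinarith [dist_triangle_right x y z, mul_pos hκ hr]
  have hyF : infDist y F ≤ κ * r := (infDist_le_dist_of_mem hzF).trans hy.le
  calc ENNReal.ofReal (|u x| ^ p)
      ≤ ENNReal.ofReal (2 ^ (p - 1)) *
          (ENNReal.ofReal (|u x - u y| ^ p) + ENNReal.ofReal (|u y| ^ p)) :=
        ENNReal.ofReal_abs_rpow_le_two_rpow_mul hp _ _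
    _ ≤ ENNReal.ofReal (2 ^ (p - 1)) *
          (ENNReal.ofReal ((2 * σ * κ * r) ^ (s * p)) * V * fracKernel μ s p u x y +
            ENNReal.ofReal ((κ * r) ^ (s * p)) * distWeight s p F u y) := by
        gcongr
        · exact ofReal_abs_sub_rpow_le_mul_fracKernel hsp (by positivity) hxy hV hV0 hVtop
        · exact ofReal_abs_rpow_le_mul_distWeight hsp (by positivity) hyF
    _ = _ := by
        rw [Real.mul_rpow (by positivity) hr.le, Real.mul_rpow hκ.le hr.le,
          ENNReal.ofReal_mul (by positivity), ENNReal.ofReal_mul (by positivity)]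
        ring

variable [OpensMeasurableSpace X]

theorem measure_ball_mul_distWeight_le {V : ℝ≥0∞} (hu : Measurable u) (hp : 1 ≤ p)
    (hsp : 0 ≤ s * p) (hσ : 1 ≤ σ) (hr : 0 < r) (hκ : 2 ≤ κ) (hF : F ⊆ closedBall z r)
    (hzF : z ∈ F) (hV : ∀ y ∈ ball z (κ * r), μ (ball x (dist x y)) ≤ V) (hV0 : V ≠ 0)
    (hVtop : V ≠ ⊤) (hx : x ∈ ball z (σ * κ * r) \ ball z (κ * r)) :
    μ (ball z (κ * r)) * distWeight s p F u x ≤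
      ENNReal.ofReal (2 ^ (p - 1)) *
        (ENNReal.ofReal ((2 * σ * κ) ^ (s * p)) * V *
            ∫⁻ y in ball z (κ * r), fracKernel μ s p u x y ∂μ +
          ENNReal.ofReal (κ ^ (s * p)) * ∫⁻ y in ball z (κ * r), distWeight s p F u y ∂μ) := by
  have hxF : r ≤ infDist x F := (le_infDist ⟨z, hzF⟩).2 fun y hy => by
    have hxz : κ * r ≤ dist x z := not_lt.1 hx.2
    nlinarith [dist_triangle x y z, mem_closedBall.1 (hF hy)]
  have hT0 : ENNReal.ofReal (r ^ (s * p)) ≠ 0 :=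
    (ENNReal.ofReal_pos.2 (Real.rpow_pos_of_pos hr _)).ne'
  rw [← ENNReal.mul_le_mul_iff_right hT0 ENNReal.ofReal_ne_top]
  calc ENNReal.ofReal (r ^ (s * p)) * (μ (ball z (κ * r)) * distWeight s p F u x)
      = μ (ball z (κ * r)) * (ENNReal.ofReal (r ^ (s * p)) * distWeight s p F u x) := by ring
    _ ≤ μ (ball z (κ * r)) * ENNReal.ofReal (|u x| ^ p) := by
        gcongr
        exact ofReal_rpow_mul_distWeight_le hsp hr.le hxF
    _ = ∫⁻ _ in ball z (κ * r), ENNReal.ofReal (|u x| ^ p) ∂μ := by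
        rw [setLIntegral_const, mul_comm]
    _ ≤ ∫⁻ y in ball z (κ * r), ENNReal.ofReal (r ^ (s * p)) *
          (ENNReal.ofReal (2 ^ (p - 1)) * (ENNReal.ofReal ((2 * σ * κ) ^ (s * p)) * V *
            fracKernel μ s p u x y + ENNReal.ofReal (κ ^ (s * p)) * distWeight s p F u y)) ∂μ :=
        setLIntegral_mono' measurableSet_ball fun y hy =>
          ofReal_abs_rpow_le_fracKernel_add_distWeight hp hsp hσ hr (by positivity) hzF hx.1 hy
            (hV y hy) hV0 hVtop
    _ = _ := by
        rw [lintegral_const_mul' _ _ ENNReal.ofReal_ne_top,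
          lintegral_const_mul' _ _ ENNReal.ofReal_ne_top,
          lintegral_add_right _ ((measurable_distWeight hu).const_mul _),
          lintegral_const_mul' _ _ (ENNReal.mul_ne_top ENNReal.ofReal_ne_top hVtop),
          lintegral_const_mul' _ _ ENNReal.ofReal_ne_top]

theorem lintegral_annulus_distWeight_le (hu : Measurable u) (hp : 1 ≤ p) (hsp : 0 ≤ s * p)
    (hσ : 1 ≤ σ) (hr : 0 < r) (hκ : 2 ≤ κ) (hF : F ⊆ closedBall z r) (hzF : z ∈ F)
    (hdoubling : ∀ (x : X) (ρ : ℝ), 0 < ρ →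
      μ (ball x (2 * ρ)) ≤ ENNReal.ofReal c * μ (ball x ρ))
    (hc : 0 < c) (hN : 3 * σ ≤ 2 ^ N) (hM0 : μ (ball z (κ * r)) ≠ 0)
    (hMtop : μ (ball z (κ * r)) ≠ ⊤) :
    ∫⁻ x in ball z (σ * κ * r) \ ball z (κ * r), distWeight s p F u x ∂μ ≤
      ENNReal.ofReal (2 ^ (p - 1)) *
        (ENNReal.ofReal ((2 * σ * κ) ^ (s * p)) * ENNReal.ofReal c ^ N *
            ∫⁻ x in ball z (σ * κ * r), ∫⁻ y in ball z (σ * κ * r), fracKernel μ s p u x y ∂μ ∂μ +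
          ENNReal.ofReal (κ ^ (s * p)) * ENNReal.ofReal c ^ N *
            ∫⁻ y in ball z (κ * r), distWeight s p F u y ∂μ) := by
  have hκr : 0 < κ * r := by positivity
  set V := ENNReal.ofReal c ^ N * μ (ball z (κ * r))
  have hV0 : V ≠ 0 := mul_ne_zero (pow_ne_zero _ (ENNReal.ofReal_pos.2 hc).ne') hM0
  have hVtop : V ≠ ⊤ := ENNReal.mul_ne_top (ENNReal.pow_ne_top ENNReal.ofReal_ne_top) hMtop
  have hBκB : ball z (κ * r) ⊆ ball z (σ * κ * r) :=
    ball_subset_ball (by nlinarith)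
  have hannulus : μ (ball z (σ * κ * r) \ ball z (κ * r)) ≤ V :=
    (measure_mono (sdiff_subset.trans (ball_subset_ball (by nlinarith)))).trans
      (measure_ball_two_pow_mul_le hdoubling z hκr N)
  rw [← ENNReal.mul_le_mul_iff_right hM0 hMtop, ← lintegral_const_mul' _ _ hMtop]
  refine (setLIntegral_mono' (measurableSet_ball.diff measurableSet_ball) fun x hx =>
    measure_ball_mul_distWeight_le hu hp hsp hσ hr hκ hF hzF
      (fun y hy => measure_ball_dist_le_pow_mul hdoubling hσ hκr hN hx.1 hy) hV0 hVtop hx).trans ?_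
  rw [lintegral_const_mul' _ _ ENNReal.ofReal_ne_top, lintegral_add_right _ measurable_const,
    lintegral_const_mul' _ _ (ENNReal.mul_ne_top ENNReal.ofReal_ne_top hVtop), setLIntegral_const]
  calc _ ≤ ENNReal.ofReal (2 ^ (p - 1)) *
        (ENNReal.ofReal ((2 * σ * κ) ^ (s * p)) * V *
            ∫⁻ x in ball z (σ * κ * r), ∫⁻ y in ball z (σ * κ * r), fracKernel μ s p u x y ∂μ ∂μ +
          ENNReal.ofReal (κ ^ (s * p)) * (∫⁻ y in ball z (κ * r), distWeight s p F u y ∂μ) * V) := by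
        gcongr
        exact sdiff_subset
    _ = _ := by ring

theorem lintegral_diff_distWeight_le (hFc : IsClosed F) (hF : F ⊆ closedBall z r) (hzF : z ∈ F)
    (hu : Measurable u) (hu0 : ∀ x ∈ F, u x = 0) (hp : 1 ≤ p) (hsp : 0 ≤ s * p)
    (hσ : 1 ≤ σ) (hr : 0 < r) (hκ : 2 ≤ κ)
    (hdoubling : ∀ (x : X) (ρ : ℝ), 0 < ρ →
      μ (ball x (2 * ρ)) ≤ ENNReal.ofReal c * μ (ball x ρ))
    (hc : 0 < c) (hN : 3 * σ ≤ 2 ^ N) (hM0 : μ (ball z (κ * r)) ≠ 0)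
    (hMtop : μ (ball z (κ * r)) ≠ ⊤) :
    ∫⁻ x in ball z (σ * κ * r) \ F, distWeight s p F u x ∂μ ≤
      ENNReal.ofReal (2 ^ (p - 1) * (2 * σ * κ) ^ (s * p) * c ^ N) *
          ∫⁻ x in ball z (σ * κ * r), ∫⁻ y in ball z (σ * κ * r), fracKernel μ s p u x y ∂μ ∂μ +
        ENNReal.ofReal (1 + 2 ^ (p - 1) * κ ^ (s * p) * c ^ N) *
          ∫⁻ x in ball z (κ * r) \ F, distWeight s p F u x ∂μ := by
  have hF0 : ∫⁻ x in ball z (κ * r) ∩ F, distWeight s p F u x ∂μ = 0 :=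
    setLIntegral_eq_zero (measurableSet_ball.inter hFc.measurableSet) fun x hx =>
      distWeight_eq_zero (by linarith) (hu0 x hx.2)
  have hinner : ∫⁻ x in ball z (κ * r), distWeight s p F u x ∂μ =
      ∫⁻ x in ball z (κ * r) \ F, distWeight s p F u x ∂μ := by
    rw [← lintegral_inter_add_sdiff _ _ hFc.measurableSet, hF0, zero_add]
  have hsplit : ∫⁻ x in ball z (σ * κ * r) \ F, distWeight s p F u x ∂μ ≤
      ∫⁻ x in ball z (κ * r) \ F, distWeight s p F u x ∂μ +
        ∫⁻ x in ball z (σ * κ * r) \ ball z (κ * r), distWeight s p F u x ∂μ := by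
    rw [← lintegral_inter_add_sdiff _ _ measurableSet_ball]
    exact add_le_add (lintegral_mono_set fun x hx => ⟨hx.2, hx.1.2⟩)
      (lintegral_mono_set fun x hx => ⟨hx.1.1, hx.2⟩)
  refine hsplit.trans ?_
  have hannulus := lintegral_annulus_distWeight_le (u := u) hu hp hsp hσ hr hκ hF hzF hdoubling hc
    hN hM0 hMtop
  rw [hinner] at hannulus
  have h2 : (0 : ℝ) ≤ 2 ^ (p - 1) := by positivity
  rw [ENNReal.ofReal_add zero_le_one (by positivity), ENNReal.ofReal_one,
    ENNReal.ofReal_mul (by positivity), ENNReal.ofReal_mul h2, ENNReal.ofReal_mul (by positivity),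
    ENNReal.ofReal_mul h2, ENNReal.ofReal_pow hc.le]
  exact (add_le_add le_rfl hannulus).trans_eq (by ring)

end HoleFilling

theorem truncSet_hole_filling_general {X : Type*} [MetricSpace X] [MeasurableSpace X] [BorelSpace X]
    (μ : Measure X) (c_μ : ℝ) (hc : 1 < c_μ)
    (hball : ∀ (x : X) (ρ : ℝ), 0 < ρ → 0 < μ (ball x ρ) ∧ μ (ball x ρ) < ⊤)
    (hdoubling : ∀ (x : X) (ρ : ℝ), 0 < ρ →
      μ (ball x (2 * ρ)) ≤ ENNReal.ofReal c_μ * μ (ball x ρ))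
    (p s : ℝ) (hp : 1 ≤ p) (hs0 : 0 < s)
    (σ κ : ℝ) (hσ : 1 ≤ σ) (hκ : 2 ≤ κ) :
    ∃ C₁ C₃ : ℝ, 0 < C₁ ∧ 0 < C₃ ∧
      ∀ (E : Set X), IsClosed E → ∀ z ∈ E, ∀ r : ℝ, 0 < r →
        ∀ u : X → ℝ, (∃ L : ℝ≥0, LipschitzWith L u) →
          (∀ x ∈ truncSet E z r, u x = 0) →
          (∫⁻ x in ball z (σ * κ * r) \ truncSet E z r,
              ENNReal.ofReal (|u x| ^ p) /
                ENNReal.ofReal (infDist x (truncSet E z r) ^ (s * p)) ∂μ) ≤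
            ENNReal.ofReal C₁ *
                ∫⁻ x in ball z (σ * κ * r),
                  ∫⁻ y in ball z (σ * κ * r), fracKernel μ s p u x y ∂μ ∂μ +
              ENNReal.ofReal (1 + 3 ^ p * κ ^ (s * p) * C₃) *
                ∫⁻ x in ball z (κ * r) \ truncSet E z r,
                  ENNReal.ofReal (|u x| ^ p) /
                    ENNReal.ofReal (infDist x (truncSet E z r) ^ (s * p)) ∂μ := by
  obtain ⟨N, hN⟩ := pow_unbounded_of_one_lt (3 * σ) one_lt_two
  have hσ0 : 0 < σ := by linarith
  have hκ0 : 0 < κ := by linarith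
  have hc0 : 0 < c_μ := by linarith
  have hsp : 0 ≤ s * p := by positivity
  have h23 : (2 : ℝ) ^ (p - 1) ≤ 3 ^ p :=
    (Real.rpow_le_rpow_of_exponent_le one_le_two (by linarith)).trans
      (Real.rpow_le_rpow zero_le_two (by norm_num) (by linarith))
  refine ⟨2 ^ (p - 1) * (2 * σ * κ) ^ (s * p) * c_μ ^ N, c_μ ^ N, by positivity, by positivity,
    fun E _ z hz r hr u ⟨L, hL⟩ hu0 => ?_⟩
  have hκr : 0 < κ * r := by positivity
  calc _ ≤ _ := lintegral_diff_distWeight_le (F := truncSet E z r) isClosed_closure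
        (truncSet_subset_closedBall E z hr.le) (mem_truncSet_self E z hz hr.le)
        hL.continuous.measurable hu0 hp hsp hσ hr hκ hdoubling hc0 hN.le
        (hball z _ hκr).1.ne' (hball z _ hκr).2.ne
    _ ≤ _ := by gcongr _ + ENNReal.ofReal (1 + ?_ * _ * _) * _

/-- Hole-filling lemma: for the truncated set `F`, the weighted integral of `|u|^p`
over `B(z,σκr) \ F` is controlled by the Gagliardo seminorm on `B(z,σκr)` plus the
weighted integral over the smaller annulus `B(z,κr) \ F`, with constants
`C₁ = C(s, c_μ, p, σ, κ)` and `C₂ = 1 + 3^p κ^{sp} C(c_μ, σ)`. -/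
theorem truncSet_hole_filling {X : Type*} [MetricSpace X] [MeasurableSpace X] [BorelSpace X]
    [Nontrivial X]
    (μ : Measure X) (c_μ : ℝ) (hc : 1 < c_μ)
    (hball : ∀ (x : X) (ρ : ℝ), 0 < ρ → 0 < μ (ball x ρ) ∧ μ (ball x ρ) < ⊤)
    (hdoubling : ∀ (x : X) (ρ : ℝ), 0 < ρ →
      μ (ball x (2 * ρ)) ≤ ENNReal.ofReal c_μ * μ (ball x ρ))
    (p s : ℝ) (hp : 1 ≤ p) (hs0 : 0 < s) (hs1 : s < 1)
    (σ κ : ℝ) (hσ : 1 ≤ σ) (hκ : 2 ≤ κ) :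
    ∃ C₁ C₃ : ℝ, 0 < C₁ ∧ 0 < C₃ ∧
      ∀ (E : Set X), IsClosed E → ∀ z ∈ E, ∀ r : ℝ, 0 < r →
        ∀ u : X → ℝ, (∃ L : ℝ≥0, LipschitzWith L u) →
          (∀ x ∈ truncSet E z r, u x = 0) →
          (∫⁻ x in ball z (σ * κ * r) \ truncSet E z r,
              ENNReal.ofReal (|u x| ^ p) /
                ENNReal.ofReal (infDist x (truncSet E z r) ^ (s * p)) ∂μ) ≤
            ENNReal.ofReal C₁ *
                ∫⁻ x in ball z (σ * κ * r),
                  ∫⁻ y in ball z (σ * κ * r), fracKernel μ s p u x y ∂μ ∂μ +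
              ENNReal.ofReal (1 + 3 ^ p * κ ^ (s * p) * C₃) *
                ∫⁻ x in ball z (κ * r) \ truncSet E z r,
                  ENNReal.ofReal (|u x| ^ p) /
                    ENNReal.ofReal (infDist x (truncSet E z r) ^ (s * p)) ∂μ :=
  truncSet_hole_filling_general μ c_μ hc hball hdoubling p s hp hs0 σ κ hσ hκ
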